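/- Let J be a 2-torsion free Jordan ring with nontrivial idempotent e satisfying conditions (i)–(iii), and φ : J → J' a bijective n-multiplicative isomorphism onto a Jordan ring J'. Then φ is additive on J_{1/2}: φ(a + b) = φ(a) + φ(b) for all a, b ∈ J_{1/2}. -/

import Mathlib

/-- Peirce 1-component relative to `e`: elements `x` with `e*x = x`. -/
def peirce1 {J : Type*} [Mul J] (e : J) : Set J := {x | e * x = x}

/-- Peirce 1/2-component relative to `e`: elements `x` with `e*x = (1/2)x`, i.e. `e*x + e*x = x`. -/
def peirceHalf {J : Type*} [Mul J] [Add J] (e : J) : Set J := {x | e * x + e * x = x}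

/-- Peirce 0-component relative to `e`: elements `x` with `e*x = 0`. -/
def peirce0 {J : Type*} [Mul J] [Zero J] (e : J) : Set J := {x | e * x = 0}

/-- The right-normed nonassociative monomial `x₁(x₂(⋯(x_{n-1}x_n)⋯))` on a list of arguments. -/
def rnm {J : Type*} [Mul J] [Zero J] : List J → J
  | [] => 0
  | [x] => x
  | x :: y :: l => x * rnm (y :: l)

/-- `φ` is an `n`-multiplicative map (w.r.t. the right-normed monomial of degree `n`). -/
def IsNMulMap {J J' : Type*} [Mul J] [Zero J] [Mul J'] [Zero J'] (n : ℕ) (φ : J → J') : Prop :=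
  ∀ l : List J, l.length = n → φ (rnm l) = rnm (l.map φ)

/-!
Write `J₁, J_{1/2}, J₀` for the Peirce spaces of `e` and `Z = J₁ ⊕ J₀`. The Peirce multiplication
rules all come from the linearized Jordan identity, which is available because `J` has no
`2`-torsion.

To prove `φ (x + y) = φ x + φ y`, let `c` be the preimage of `φ x + φ y`; we show `c = x + y`. Putting
`c` in the last slot of the `n`-multiplicative identity gives `φ (U c) = φ (U x) + φ (U y)` for every
word `U` of `n - 1` left multiplications. Words in `e` and `J₀` separate points by (ii), so
`s c = s x + s y` follows once `φ` is known to be additive on the pairs `(W (s x), W (s y))`.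
Putting `c` in the first slot does the same for right multiplication by `e` and by elements of
`J_{1/2}`, and then (i) and (iii) force `c - x - y = 0`. Additivity is established in turn on
`J_{1/2} × J₀`, `J_{1/2} × Z`, `J_{1/2} × J_{1/2} J₀` and `J_{1/2} × J_{1/2}`.
-/

open scoped Pointwise

theorem rnm_cons_of_ne_nil {M : Type*} [Mul M] [Zero M] (x : M) {l : List M} (hl : l ≠ []) :
    rnm (x :: l) = x * rnm l := by
  obtain ⟨y, l, rfl⟩ := List.exists_cons_of_ne_nil hl
  rfl

theorem rnm_append_singleton {M : Type*} [Mul M] [Zero M] (U : List M) (w : M) :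
    rnm (U ++ [w]) = U.foldr (· * ·) w := by
  induction U with
  | nil => rfl
  | cons u U ih => rw [List.cons_append, rnm_cons_of_ne_nil u (by simp), ih]; rfl

section LeftMulWords

variable {M : Type*} [NonUnitalNonAssocRing M]

theorem foldr_mul_add (U : List M) (p q : M) :
    U.foldr (· * ·) (p + q) = U.foldr (· * ·) p + U.foldr (· * ·) q := by
  induction U with
  | nil => rfl
  | cons u U ih => simp only [List.foldr_cons, ih, mul_add]

theorem foldr_mul_sub (U : List M) (p q : M) :
    U.foldr (· * ·) (p - q) = U.foldr (· * ·) p - U.foldr (· * ·) q := by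
  induction U with
  | nil => rfl
  | cons u U ih => simp only [List.foldr_cons, ih, mul_sub]

theorem foldr_mul_zero (U : List M) : U.foldr (· * ·) (0 : M) = 0 := by
  induction U with
  | nil => rfl
  | cons u U ih => simp only [List.foldr_cons, ih, mul_zero]

end LeftMulWords

namespace IsNMulMap

variable {J J' : Type*} {n : ℕ} {φ : J → J'}

theorem map_foldr [Mul J] [Zero J] [Mul J'] [Zero J'] (hmul : IsNMulMap n φ) (U : List J)
    (hU : U.length + 1 = n) (w : J) :
    φ (U.foldr (· * ·) w) = (U.map φ).foldr (· * ·) (φ w) := by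
  have h := hmul (U ++ [w]) (by simpa using hU)
  rwa [rnm_append_singleton, List.map_append, List.map_singleton, rnm_append_singleton] at h

variable [NonUnitalNonAssocRing J] [NonUnitalNonAssocRing J']

theorem map_zero (hmul : IsNMulMap n φ) (hn : 2 ≤ n) (hφ : Function.Surjective φ) : φ 0 = 0 := by
  obtain ⟨p, hp⟩ := hφ 0
  have h := hmul.map_foldr (p :: List.replicate (n - 2) p) (by simp; omega) 0
  rwa [foldr_mul_zero, List.map_cons, List.foldr_cons, hp, zero_mul] at h

theorem map_foldr_eq_add (hmul : IsNMulMap n φ) {c x y : J} (hc : φ c = φ x + φ y) (U : List J)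
    (hU : U.length + 1 = n) :
    φ (U.foldr (· * ·) c) = φ (U.foldr (· * ·) x) + φ (U.foldr (· * ·) y) := by
  rw [hmul.map_foldr U hU, hmul.map_foldr U hU, hmul.map_foldr U hU, hc, foldr_mul_add]

theorem map_mul_foldr_eq_add (hmul : IsNMulMap n φ) {c x y : J} (hc : φ c = φ x + φ y)
    (V : List J) (hV : V.length + 2 = n) (s : J) :
    φ (c * V.foldr (· * ·) s) = φ (x * V.foldr (· * ·) s) + φ (y * V.foldr (· * ·) s) := by
  have key (z : J) : φ (z * V.foldr (· * ·) s) = φ z * (V.map φ).foldr (· * ·) (φ s) :=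
    hmul.map_foldr (z :: V) (by simp; omega) s
  rw [key, key, key, hc, add_mul]

end IsNMulMap

section PeirceSpaces

variable {J : Type*} [Mul J] {e x : J}

-- `J₁ ⊕ J₀`: the elements on which left multiplication by `e` is idempotent
def peirceDiag (e : J) : Set J := {x | e * (e * x) = e * x}

-- words in these letters separate the points of `J`, by condition (ii)
def peirceLetters [Zero J] (e : J) : Set J := insert e (peirce0 e)

def LetterStable [Zero J] (e : J) (P : Set J) : Prop :=
  ∀ u ∈ peirceLetters e, ∀ p ∈ P, u * p ∈ P

theorem mem_peirce1 : x ∈ peirce1 e ↔ e * x = x := Iff.rfl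

theorem mem_peirceHalf [Add J] : x ∈ peirceHalf e ↔ e * x + e * x = x := Iff.rfl

theorem mem_peirce0 [Zero J] : x ∈ peirce0 e ↔ e * x = 0 := Iff.rfl

theorem mem_peirceDiag : x ∈ peirceDiag e ↔ e * (e * x) = e * x := Iff.rfl

theorem foldr_mem_of_letterStable [Zero J] {P : Set J} (hP : LetterStable e P) {U : List J}
    (hU : ∀ u ∈ U, u ∈ peirceLetters e) {p : J} (hp : p ∈ P) : U.foldr (· * ·) p ∈ P := by
  induction U with
  | nil => exact hp
  | cons u U ih =>
    exact hP u (hU u List.mem_cons_self) _ (ih fun v hv => hU v (List.mem_cons_of_mem u hv))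

theorem eq_zero_of_forall_foldr_eq_zero [Zero J]
    (hc2 : ∀ a ∈ peirce0 e, (∀ t ∈ peirce0 e, t * a = 0) → a = 0) (m : ℕ) {w : J}
    (hw : ∀ U : List J, U.length = m → (∀ u ∈ U, u ∈ peirceLetters e) → U.foldr (· * ·) w = 0) :
    w = 0 := by
  induction m generalizing w with
  | zero => exact hw [] rfl (by simp)
  | succ m ih =>
    have hu : ∀ u ∈ peirceLetters e, u * w = 0 := fun u hu => ih fun U hU hUe => by
      simpa using hw (U ++ [u]) (by simp [hU]) (by simpa [or_imp, forall_and] using ⟨hUe, hu⟩)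
    exact hc2 w (hu e (Set.mem_insert _ _)) fun t ht => hu t (Set.mem_insert_of_mem _ ht)

theorem foldr_replicate_of_mem_peirce1 (hx : x ∈ peirce1 e) (m : ℕ) :
    (List.replicate m e).foldr (· * ·) x = x := by
  induction m with
  | zero => rfl
  | succ m ih => rw [List.replicate_succ, List.foldr_cons, ih, hx]

end PeirceSpaces

section Half

variable {J : Type*} [NonUnitalNonAssocRing J] {e h : J}

theorem mul_mem_peirceHalf (hh : h ∈ peirceHalf e) : e * h ∈ peirceHalf e := by
  rw [mem_peirceHalf, ← mul_add, hh]

theorem eq_zero_of_mem_peirceHalf_of_mul_eq_zero (hh : h ∈ peirceHalf e) (h0 : e * h = 0) :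
    h = 0 := by
  rw [mem_peirceHalf, h0, add_zero] at hh
  exact hh.symm

theorem add_mem_peirceHalf {k : J} (hh : h ∈ peirceHalf e) (hk : k ∈ peirceHalf e) :
    h + k ∈ peirceHalf e := by
  rw [mem_peirceHalf] at hh hk ⊢
  rw [mul_add]
  linear_combination (norm := abel) hh + hk

theorem exists_mem_peirceHalf_foldr_replicate_eq (hh : h ∈ peirceHalf e) (m : ℕ) :
    ∃ s ∈ peirceHalf e, (List.replicate m e).foldr (· * ·) s = h := by
  induction m generalizing h with
  | zero => exact ⟨h, hh, rfl⟩
  | succ m ih =>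
    obtain ⟨s, hs, hsh⟩ := ih (add_mem_peirceHalf hh hh)
    exact ⟨s, hs, by rw [List.replicate_succ, List.foldr_cons, hsh, mul_add, hh]⟩

end Half

theorem isCommJordan_of_jordan_identity {J : Type*} [NonUnitalNonAssocCommRing J]
    (hJ : ∀ x y : J, x * x * y * x = x * x * (y * x)) : IsCommJordan J where
  lmul_comm_rmul_rmul a b := by
    have h := hJ a b
    rwa [mul_comm (a * a * b), mul_comm (a * a) b, mul_comm (a * a) (b * a), mul_comm b a,
      eq_comm] at h

section Jordan

variable {J : Type*} [NonUnitalNonAssocCommRing J] [IsCommJordan J]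
  (h2 : ∀ x : J, x + x = 0 → x = 0)

include h2

theorem linearized_jordan (a b c y : J) :
    a * (b * c * y) + b * (c * a * y) + c * (a * b * y) =
      b * c * (a * y) + c * a * (b * y) + a * b * (c * y) := by
  have h := DFunLike.congr_fun (two_nsmul_lie_lmul_lmul_add_add_eq_zero a b c) y
  -- the Lie bracket on `AddMonoid.End J` is the commutator of left multiplications
  change 2 • (a * (b * c * y) - b * c * (a * y) + (b * (c * a * y) - c * a * (b * y)) +
    (c * (a * b * y) - a * b * (c * y))) = 0 at h
  rw [two_nsmul] at h
  linear_combination (norm := abel) h2 _ h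

variable {e : J} (hid : e * e = e)
include hid

theorem idem_linearized_jordan (v y : J) :
    e * (e * v * y) + e * (e * v * y) + v * (e * y) =
      e * v * (e * y) + e * v * (e * y) + e * (v * y) := by
  have h := linearized_jordan h2 e e v y
  rwa [hid, mul_comm v e] at h

theorem peirce_cubic (w : J) :
    e * (e * (e * w)) + e * (e * (e * w)) + e * w = e * (e * w) + e * (e * w) + e * (e * w) := by
  have h := idem_linearized_jordan h2 hid w e
  rwa [hid, mul_comm w e, mul_comm (e * w) e] at h

theorem peirce0_mul_comm {t : J} (ht : t ∈ peirce0 e) (w : J) : t * (e * w) = e * (t * w) := by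
  have h := idem_linearized_jordan h2 hid t w
  simpa only [mem_peirce0.mp ht, zero_mul, mul_zero, zero_add] using h

theorem idem_mul_mul_peirce0 {t : J} (ht : t ∈ peirce0 e) (a : J) : e * (a * t) = e * a * t := by
  rw [mul_comm a t, ← peirce0_mul_comm h2 hid ht, mul_comm]

theorem peirce0_mul_peirce1 {t x : J} (ht : t ∈ peirce0 e) (hx : x ∈ peirce1 e) : t * x = 0 := by
  have hxt : e * (x * t) = 0 := by
    have h := idem_linearized_jordan h2 hid x t
    rw [mem_peirce1.mp hx, mem_peirce0.mp ht] at h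
    simp only [mul_zero, add_zero, zero_add] at h
    exact add_eq_left.mp h
  calc t * x = t * (e * x) := by rw [mem_peirce1.mp hx]
    _ = e * (t * x) := peirce0_mul_comm h2 hid ht x
    _ = 0 := by rw [mul_comm t x, hxt]

theorem peirce0_mul_peirceHalf {t h : J} (ht : t ∈ peirce0 e) (hh : h ∈ peirceHalf e) :
    t * h ∈ peirceHalf e := by
  rw [mem_peirceHalf, ← peirce0_mul_comm h2 hid ht, ← mul_add, hh]

theorem peirceHalf_mul_peirce1 {h x : J} (hh : h ∈ peirceHalf e) (hx : x ∈ peirce1 e) :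
    h * x ∈ peirceHalf e := by
  have hxh : e * (x * h) = x * (e * h) := by
    have h := idem_linearized_jordan h2 hid x h
    rw [mem_peirce1.mp hx] at h
    linear_combination (norm := abel) h
  rw [mem_peirceHalf, mul_comm h x, hxh, ← mul_add, hh]

theorem peirce0_mul_peirce0 {t s : J} (ht : t ∈ peirce0 e) (hs : s ∈ peirce0 e) :
    t * s ∈ peirce0 e := by
  rw [mem_peirce0, ← peirce0_mul_comm h2 hid ht, mem_peirce0.mp hs, mul_zero]

theorem peirce0_mul_peirceDiag {t z : J} (ht : t ∈ peirce0 e) (hz : z ∈ peirceDiag e) :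
    t * z ∈ peirce0 e := by
  rw [mem_peirce0, ← peirce0_mul_comm h2 hid ht]
  exact peirce0_mul_peirce1 h2 hid ht hz

theorem peirceHalf_mul_peirceHalf {h k : J} (hh : h ∈ peirceHalf e) (hk : k ∈ peirceHalf e) :
    h * k ∈ peirceDiag e := by
  have key {a b : J} (ha : a ∈ peirceHalf e) (hb : b ∈ peirceHalf e) :
      a * (e * (e * b)) = e * a * (e * b) :=
    sub_eq_zero.mp <| h2 _ <| by
      rw [sub_add_sub_comm, ← mul_add, mul_mem_peirceHalf hb, ← add_mul, ha, sub_self]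
  have hlin := linearized_jordan h2 e h k e
  rw [hid, mul_comm (h * k) e, mul_comm k e, mul_comm (e * k) e, mul_comm h e,
    mul_comm (e * h) e, key hh hk, key hk hh] at hlin
  rw [mem_peirceDiag]
  linear_combination (norm := abel) hlin

theorem mem_peirce1_of_forall_peirce0_mul_eq_zero
    (hc2 : ∀ a ∈ peirce0 e, (∀ t ∈ peirce0 e, t * a = 0) → a = 0)
    (hc3 : ∀ a ∈ peirceHalf e, (∀ t ∈ peirce0 e, t * a = 0) → a = 0)
    {d : J} (hd : ∀ t ∈ peirce0 e, t * d = 0) : d ∈ peirce1 e := by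
  have hhalf : e * d - e * (e * d) ∈ peirceHalf e := by
    rw [mem_peirceHalf, mul_sub]
    linear_combination (norm := abel) -peirce_cubic h2 hid d
  have hdiag : e * d - e * (e * d) = 0 := hc3 _ hhalf fun t ht => by
    simp only [mul_sub, peirce0_mul_comm h2 hid ht, hd t ht, mul_zero, sub_self]
  have hzero : d - e * d ∈ peirce0 e := by rw [mem_peirce0, mul_sub, hdiag]
  have := hc2 _ hzero fun t ht => by rw [mul_sub, peirce0_mul_comm h2 hid ht, hd t ht, mul_zero, sub_self]
  exact (sub_eq_zero.mp this).symm

theorem letterStable_peirceHalf : LetterStable e (peirceHalf e) := by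
  rintro u (rfl | hu) h hh
  · exact mul_mem_peirceHalf hh
  · exact peirce0_mul_peirceHalf h2 hid hu hh

theorem letterStable_peirce0 : LetterStable e (peirce0 e) := by
  rintro u (rfl | hu) t ht
  · rw [mem_peirce0, mem_peirce0.mp ht, mul_zero]
  · exact peirce0_mul_peirce0 h2 hid hu ht

theorem letterStable_peirceDiag : LetterStable e (peirceDiag e) := by
  rintro u (rfl | hu) z hz
  · rw [mem_peirceDiag, mem_peirceDiag.mp hz]
    exact hz
  · have h0 := peirce0_mul_peirceDiag h2 hid hu hz
    rw [mem_peirceDiag, mem_peirce0.mp h0, mul_zero]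

theorem letterStable_peirceHalf_mul_peirce0 : LetterStable e (peirceHalf e * peirce0 e) := by
  intro u hu _ hp
  obtain ⟨h, hh, t, ht, rfl⟩ := Set.mem_mul.mp hp
  rcases hu with rfl | hu
  · rw [idem_mul_mul_peirce0 h2 hid ht]
    exact Set.mul_mem_mul (mul_mem_peirceHalf hh) ht
  · rw [mul_comm, mul_comm h t]
    exact Set.mul_mem_mul (peirce0_mul_peirceHalf h2 hid ht hh) hu

theorem foldr_replicate_mul_peirce0 {t : J} (ht : t ∈ peirce0 e) (a : J) (m : ℕ) :
    (List.replicate m e).foldr (· * ·) (a * t) = (List.replicate m e).foldr (· * ·) a * t := by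
  induction m with
  | zero => rfl
  | succ m ih => rw [List.replicate_succ, List.foldr_cons, List.foldr_cons, ih,
      idem_mul_mul_peirce0 h2 hid ht]

end Jordan

def AdditiveOn {J J' : Type*} [Add J] [Add J'] (φ : J → J') (P Q : Set J) : Prop :=
  ∀ x ∈ P, ∀ y ∈ Q, φ (x + y) = φ x + φ y

section Transfer

variable {J J' : Type*} [NonUnitalNonAssocRing J] [NonUnitalNonAssocRing J'] {e : J}
  {n : ℕ} {φ : J → J'}

theorem mul_eq_add_of_map_eq_add (hc2 : ∀ a ∈ peirce0 e, (∀ t ∈ peirce0 e, t * a = 0) → a = 0)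
    (hmul : IsNMulMap n φ) (hn : 2 ≤ n) (hφ : Function.Injective φ) {P Q : Set J}
    (hP : LetterStable e P) (hQ : LetterStable e Q) (hPQ : AdditiveOn φ P Q) {c x y s : J}
    (hc : φ c = φ x + φ y) (hx : s * x ∈ P) (hy : s * y ∈ Q) : s * c = s * x + s * y := by
  refine sub_eq_zero.mp (eq_zero_of_forall_foldr_eq_zero hc2 (n - 2) fun U hU hUe => ?_)
  have h := hmul.map_foldr_eq_add hc (U ++ [s]) (by simp; omega)
  simp only [List.foldr_append, List.foldr_cons, List.foldr_nil] at h
  rw [← hPQ _ (foldr_mem_of_letterStable hP hUe hx) _ (foldr_mem_of_letterStable hQ hUe hy),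
    ← foldr_mul_add] at h
  rw [foldr_mul_sub, hφ h, sub_self]

theorem mul_eq_of_map_eq_add (hc2 : ∀ a ∈ peirce0 e, (∀ t ∈ peirce0 e, t * a = 0) → a = 0)
    (hmul : IsNMulMap n φ) (hn : 2 ≤ n) (hφ : Function.Bijective φ) {c x y s : J}
    (hc : φ c = φ x + φ y) (hy : s * y = 0) : s * c = s * x := by
  have hPQ : AdditiveOn φ Set.univ {0} := by
    rintro x - _ rfl
    rw [add_zero, hmul.map_zero hn hφ.2, add_zero]
  have h := mul_eq_add_of_map_eq_add (P := Set.univ) hc2 hmul hn hφ.1 (fun _ _ _ _ => trivial)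
    (by rintro u - _ rfl; exact mul_zero u) hPQ hc (Set.mem_univ _) hy
  rwa [hy, add_zero] at h

theorem map_mul_eq_add_of_mem_peirceHalf (hmul : IsNMulMap n φ) (hn : 2 ≤ n) {c x y h : J}
    (hc : φ c = φ x + φ y) (hh : h ∈ peirceHalf e) : φ (c * h) = φ (x * h) + φ (y * h) := by
  obtain ⟨s, -, rfl⟩ := exists_mem_peirceHalf_foldr_replicate_eq hh (n - 2)
  exact hmul.map_mul_foldr_eq_add hc _ (by simp; omega) s

theorem map_mul_eq_add_of_mem_peirce1 (hmul : IsNMulMap n φ) (hn : 2 ≤ n) {c x y w : J}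
    (hc : φ c = φ x + φ y) (hw : w ∈ peirce1 e) : φ (c * w) = φ (x * w) + φ (y * w) := by
  have h := hmul.map_mul_foldr_eq_add hc (List.replicate (n - 2) e) (by simp; omega) w
  rwa [foldr_replicate_of_mem_peirce1 hw] at h

end Transfer

section Additivity

variable {J J' : Type*} [NonUnitalNonAssocCommRing J] [IsCommJordan J] [NonUnitalNonAssocRing J']
  (h2 : ∀ x : J, x + x = 0 → x = 0) {e : J} (hid : e * e = e)
  (hc1 : ∀ a ∈ peirce1 e, (∀ t ∈ peirceHalf e, t * a = 0) → a = 0)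
  (hc1' : ∀ a ∈ peirce0 e, (∀ t ∈ peirceHalf e, t * a = 0) → a = 0)
  (hc2 : ∀ a ∈ peirce0 e, (∀ t ∈ peirce0 e, t * a = 0) → a = 0)
  (hc3 : ∀ a ∈ peirceHalf e, (∀ t ∈ peirce0 e, t * a = 0) → a = 0)
  {n : ℕ} {φ : J → J'} (hmul : IsNMulMap n φ) (hn : 2 ≤ n) (hφ : Function.Bijective φ)

include h2 hid hc2 hc3 hmul hn hφ

theorem eq_add_of_map_eq_add_of_sub_mem_peirceHalf {c x y : J} (hc : φ c = φ x + φ y)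
    (hx : x ∈ peirceDiag e) (hd : c - x - y ∈ peirceHalf e) : c = x + y := by
  have hce : φ (e * c) = φ (e * y) + φ (e * x) := by
    have h := map_mul_eq_add_of_mem_peirce1 hmul hn hc hid
    rwa [mul_comm c, mul_comm x, mul_comm y, add_comm] at h
  have he : e * (c - x - y) = 0 := hc3 _ (mul_mem_peirceHalf hd) fun t ht => by
    have hex : t * (e * x) = 0 := peirce0_mul_peirce1 h2 hid ht hx
    rw [mul_sub, mul_sub, mul_sub, mul_sub, mul_eq_of_map_eq_add hc2 hmul hn hφ hce hex, hex]
    abel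
  rw [← sub_eq_zero, ← sub_sub]
  exact eq_zero_of_mem_peirceHalf_of_mul_eq_zero hd he

theorem mul_sub_sub_eq_zero_of_map_eq_add {c x y h : J} (hc : φ c = φ x + φ y)
    (hh : h ∈ peirceHalf e) (hx : x * h ∈ peirceDiag e) (hd : h * (c - x - y) ∈ peirceHalf e) :
    h * (c - x - y) = 0 := by
  rw [mul_comm, sub_mul, sub_mul] at hd ⊢
  rw [eq_add_of_map_eq_add_of_sub_mem_peirceHalf h2 hid hc2 hc3 hmul hn hφ
    (map_mul_eq_add_of_mem_peirceHalf hmul hn hc hh) hx hd]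
  abel

include hc1 in
theorem eq_add_of_map_eq_add_of_peirce0_mul {c x y : J} (hc : φ c = φ x + φ y)
    (ht : ∀ t ∈ peirce0 e, t * c = t * x + t * y)
    (hx : ∀ h ∈ peirceHalf e, x * h ∈ peirceDiag e) : c = x + y := by
  have hd : c - x - y ∈ peirce1 e :=
    mem_peirce1_of_forall_peirce0_mul_eq_zero h2 hid hc2 hc3 fun t ht' => by
      rw [mul_sub, mul_sub, ht t ht']
      abel
  rw [← sub_eq_zero, ← sub_sub]
  exact hc1 _ hd fun h hh => mul_sub_sub_eq_zero_of_map_eq_add h2 hid hc2 hc3 hmul hn hφ hc hh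
    (hx h hh) (peirceHalf_mul_peirce1 h2 hid hh hd)

include hc1' in
theorem additiveOn_peirceHalf_peirce0 : AdditiveOn φ (peirceHalf e) (peirce0 e) := by
  intro k hk x hx
  obtain ⟨c, hc⟩ := hφ.2 (φ k + φ x)
  have hd : c - k - x ∈ peirce0 e := by
    rw [mem_peirce0, mul_sub, mul_sub, mul_eq_of_map_eq_add hc2 hmul hn hφ hc hx,
      mem_peirce0.mp hx, sub_self, sub_zero]
  have hck := hc1' _ hd fun h hh => mul_sub_sub_eq_zero_of_map_eq_add h2 hid hc2 hc3 hmul hn hφ hc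
    hh (peirceHalf_mul_peirceHalf h2 hid hk hh)
    (by rw [mul_comm]; exact peirce0_mul_peirceHalf h2 hid hd hh)
  rw [sub_sub, sub_eq_zero] at hck
  rw [← hck, hc]

include hc1 hc1' in
theorem additiveOn_peirceHalf_peirceDiag : AdditiveOn φ (peirceHalf e) (peirceDiag e) := by
  intro k hk z hz
  obtain ⟨c, hc⟩ := hφ.2 (φ k + φ z)
  have htc (t : J) (ht : t ∈ peirce0 e) : t * c = t * k + t * z :=
    mul_eq_add_of_map_eq_add hc2 hmul hn hφ.1 (letterStable_peirceHalf h2 hid)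
      (letterStable_peirce0 h2 hid) (additiveOn_peirceHalf_peirce0 h2 hid hc1' hc2 hc3 hmul hn hφ)
      hc (peirce0_mul_peirceHalf h2 hid ht hk) (peirce0_mul_peirceDiag h2 hid ht hz)
  rw [← eq_add_of_map_eq_add_of_peirce0_mul h2 hid hc1 hc2 hc3 hmul hn hφ hc htc
    fun h hh => peirceHalf_mul_peirceHalf h2 hid hk hh, hc]

include hc1 hc1' in
theorem additiveOn_peirceHalf_mul_peirce0 :
    AdditiveOn φ (peirceHalf e) (peirceHalf e * peirce0 e) := by
  intro k hk _ hat
  obtain ⟨a, ha, t, ht, rfl⟩ := Set.mem_mul.mp hat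
  obtain ⟨m, rfl⟩ : ∃ m, n = m + 2 := ⟨n - 2, by omega⟩
  obtain ⟨A, hA, rfl⟩ := exists_mem_peirceHalf_foldr_replicate_eq ha m
  obtain ⟨B, hB, hBk⟩ := exists_mem_peirceHalf_foldr_replicate_eq hk (m + 1)
  rw [List.replicate_succ', List.foldr_append, List.foldr_cons, List.foldr_nil] at hBk
  have hZ := additiveOn_peirceHalf_peirceDiag h2 hid hc1 hc1' hc2 hc3 hmul hn hφ
  have hword (u v : J) : φ ((List.replicate m e).foldr (· * ·) (u * v)) =
      (List.replicate m (φ e)).foldr (· * ·) (φ u * φ v) := by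
    simpa using hmul.map_foldr (List.replicate m e ++ [u]) (by simp) v
  -- now `a = eᵐ A` and `k = eᵐ (e B)`; expand `φ (eᵐ ((A + e) (B + t)))` in two ways
  have hexp := hword (A + e) (B + t)
  rw [hZ A hA e (by rw [mem_peirceDiag, hid, hid]),
    additiveOn_peirceHalf_peirce0 h2 hid hc1' hc2 hc3 hmul hn hφ B hB t ht] at hexp
  simp only [add_mul, mul_add, foldr_mul_add, ← hword] at hexp
  rw [foldr_replicate_mul_peirce0 h2 hid ht, hBk, mem_peirce0.mp ht, foldr_mul_zero,
    hmul.map_zero hn hφ.2] at hexp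
  have hletters : ∀ u ∈ List.replicate m e, u ∈ peirceLetters e := fun u hu => by
    rw [List.eq_of_mem_replicate hu]
    exact Set.mem_insert e _
  have hAB := foldr_mem_of_letterStable (letterStable_peirceDiag h2 hid) hletters
    (peirceHalf_mul_peirceHalf h2 hid hA hB)
  have hAt : (List.replicate m e).foldr (· * ·) A * t ∈ peirceHalf e := by
    rw [mul_comm]
    exact peirce0_mul_peirceHalf h2 hid ht
      (foldr_mem_of_letterStable (letterStable_peirceHalf h2 hid) hletters hA)
  generalize (List.replicate m e).foldr (· * ·) (A * B) = z at hexp hAB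
  generalize (List.replicate m e).foldr (· * ·) A * t = w at hexp hAt ⊢
  have hsum : φ (k + w) + φ z = φ k + φ w + φ z := by
    rw [← hZ _ (add_mem_peirceHalf hk hAt) z hAB, show k + w + z = z + k + (w + 0) by abel, hexp]
    abel
  exact add_right_cancel hsum

include hc1 hc1' in
theorem additiveOn_peirceHalf_peirceHalf : AdditiveOn φ (peirceHalf e) (peirceHalf e) := by
  intro a ha b hb
  obtain ⟨c, hc⟩ := hφ.2 (φ a + φ b)
  have htc (t : J) (ht : t ∈ peirce0 e) : t * c = t * a + t * b := by
    refine mul_eq_add_of_map_eq_add hc2 hmul hn hφ.1 (letterStable_peirceHalf h2 hid)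
      (letterStable_peirceHalf_mul_peirce0 h2 hid)
      (additiveOn_peirceHalf_mul_peirce0 h2 hid hc1 hc1' hc2 hc3 hmul hn hφ)
      hc (peirce0_mul_peirceHalf h2 hid ht ha) ?_
    rw [mul_comm]
    exact Set.mul_mem_mul hb ht
  rw [← eq_add_of_map_eq_add_of_peirce0_mul h2 hid hc1 hc2 hc3 hmul hn hφ hc htc
    fun h hh => peirceHalf_mul_peirceHalf h2 hid ha hh, hc]

end Additivity

theorem nMulIso_additive_on_half_general {J J' : Type*} [NonUnitalNonAssocCommRing J] [NonUnitalNonAssocCommRing J']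
    (hJordan : ∀ x y : J, ((x * x) * y) * x = (x * x) * (y * x))
    (h2 : ∀ x : J, x + x = 0 → x = 0)
    (e : J) (hid : e * e = e)
    (hcond1 : ∀ a ∈ peirce1 e, (∀ t ∈ peirceHalf e, t * a = 0) → a = 0)
    (hcond1' : ∀ a ∈ peirce0 e, (∀ t ∈ peirceHalf e, t * a = 0) → a = 0)
    (hcond2 : ∀ a ∈ peirce0 e, (∀ t ∈ peirce0 e, t * a = 0) → a = 0)
    (hcond3 : ∀ a ∈ peirceHalf e, (∀ t ∈ peirce0 e, t * a = 0) → a = 0)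
    (n : ℕ) (hn : 2 ≤ n) (φ : J → J')
    (hbij : Function.Bijective φ) (hmul : IsNMulMap n φ) :
    ∀ a ∈ peirceHalf e, ∀ b ∈ peirceHalf e,
      φ (a + b) = φ a + φ b := by
  have := isCommJordan_of_jordan_identity hJordan
  exact additiveOn_peirceHalf_peirceHalf h2 hid hcond1 hcond1' hcond2 hcond3 hmul hn hbij

theorem nMulIso_additive_on_half {J J' : Type*} [NonUnitalNonAssocCommRing J] [NonUnitalNonAssocCommRing J']
    (hJordan : ∀ x y : J, ((x * x) * y) * x = (x * x) * (y * x))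
    (hJordan' : ∀ x y : J', ((x * x) * y) * x = (x * x) * (y * x))
    (h2 : ∀ x : J, x + x = 0 → x = 0)
    (e : J) (hid : e * e = e) (hne : e ≠ 0) (hnu : ∃ x : J, e * x ≠ x)
    (hcond1 : ∀ a ∈ peirce1 e, (∀ t ∈ peirceHalf e, t * a = 0) → a = 0)
    (hcond1' : ∀ a ∈ peirce0 e, (∀ t ∈ peirceHalf e, t * a = 0) → a = 0)
    (hcond2 : ∀ a ∈ peirce0 e, (∀ t ∈ peirce0 e, t * a = 0) → a = 0)
    (hcond3 : ∀ a ∈ peirceHalf e, (∀ t ∈ peirce0 e, t * a = 0) → a = 0)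
    (n : ℕ) (hn : 2 ≤ n) (φ : J → J')
    (hbij : Function.Bijective φ) (hmul : IsNMulMap n φ) :
    ∀ a ∈ peirceHalf e, ∀ b ∈ peirceHalf e,
      φ (a + b) = φ a + φ b :=
  nMulIso_additive_on_half_general hJordan h2 e hid hcond1 hcond1' hcond2 hcond3 n hn φ hbij hmul
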